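/- arXiv:1201.2859 — 2 statements merged into one kernel-verified Lean document; each statement's English description precedes it below -/
import Mathlib

section
/- For discrete random variables K, U, Y, Z on finite sets satisfying the Markov chain K → (U, Y) → Z, one has I(K;Y|U) − I(K;Z|U) = I(K;Y|U,Z), and consequently I(K;Y|U) − I(K;Z|U) ≤ H(Y|Z). -/
open Finset Real

section IT

variable {Ω : Type*} [Fintype Ω]

/-- A probability mass function on a finite sample space. -/
def IsPmf (μ : Ω → ℝ) : Prop := (∀ ω, 0 ≤ μ ω) ∧ ∑ ω, μ ω = 1

/-- Probability that the random variable `X` takes the value `x`. -/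
noncomputable def pr (μ : Ω → ℝ) {α : Type*} [DecidableEq α] (X : Ω → α) (x : α) : ℝ :=
  ∑ ω, if X ω = x then μ ω else 0

/-- Shannon entropy (in nats) of a finitely-valued random variable. -/
noncomputable def ent (μ : Ω → ℝ) {α : Type*} [Fintype α] [DecidableEq α] (X : Ω → α) : ℝ :=
  ∑ x, Real.negMulLog (pr μ X x)

/-- Conditional Shannon entropy `H(X | Y)`. -/
noncomputable def condEnt (μ : Ω → ℝ) {α β : Type*} [Fintype α] [DecidableEq α]
    [Fintype β] [DecidableEq β] (X : Ω → α) (Y : Ω → β) : ℝ :=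
  ent μ (fun ω => (X ω, Y ω)) - ent μ Y

/-- Mutual information `I(X;Y)`. -/
noncomputable def mi (μ : Ω → ℝ) {α β : Type*} [Fintype α] [DecidableEq α]
    [Fintype β] [DecidableEq β] (X : Ω → α) (Y : Ω → β) : ℝ :=
  ent μ X + ent μ Y - ent μ (fun ω => (X ω, Y ω))

/-- Conditional mutual information `I(X;Y|W)`. -/
noncomputable def cmi (μ : Ω → ℝ) {α β γ : Type*} [Fintype α] [DecidableEq α]
    [Fintype β] [DecidableEq β] [Fintype γ] [DecidableEq γ]
    (X : Ω → α) (Y : Ω → β) (W : Ω → γ) : ℝ :=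
  condEnt μ X W + condEnt μ Y W - condEnt μ (fun ω => (X ω, Y ω)) W

/-- Independence of two finitely-valued random variables. -/
def IndepRV (μ : Ω → ℝ) {α β : Type*} [DecidableEq α] [DecidableEq β]
    (X : Ω → α) (Y : Ω → β) : Prop :=
  ∀ x y, pr μ (fun ω => (X ω, Y ω)) (x, y) = pr μ X x * pr μ Y y

/-- `X` is uniformly distributed over its (finite) alphabet. -/
def UniformRV (μ : Ω → ℝ) {α : Type*} [Fintype α] [DecidableEq α] (X : Ω → α) : Prop :=
  ∀ x, pr μ X x = 1 / Fintype.card α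

/-- Markov chain `X → Y → Z`. -/
def MarkovRV (μ : Ω → ℝ) {α β γ : Type*} [DecidableEq α] [DecidableEq β] [DecidableEq γ]
    (X : Ω → α) (Y : Ω → β) (Z : Ω → γ) : Prop :=
  ∀ x y z, pr μ (fun ω => (X ω, Y ω, Z ω)) (x, y, z) * pr μ Y y =
    pr μ (fun ω => (X ω, Y ω)) (x, y) * pr μ (fun ω => (Y ω, Z ω)) (y, z)

/-- Binary entropy function (in nats), with the convention `0 log 0 = 0`. -/
noncomputable def binEnt (x : ℝ) : ℝ := Real.negMulLog x + Real.negMulLog (1 - x)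

end IT


/-!
Every entropy is written as an expectation over the sample space,
`H(X) = ∑ ω, μ ω * -log P(X = X ω)`, which turns relabelling, monotonicity and the Markov
factorisation into pointwise statements. By the chain rule, `I(K;Y,Z|U)` equals both
`I(K;Y|U) + I(K;Z|U,Y)` and `I(K;Z|U) + I(K;Y|U,Z)`, and the Markov chain makes `I(K;Z|U,Y)`
vanish; this is the identity. For the bound, `I(K;Y|U,Z) ≤ H(Y|U,Z) ≤ H(Y|Z)`, where
conditioning reduces entropy by Gibbs' inequality against the sub-probability
`P(x,w) P(y,w) / P(w)`.
-/

lemma sum_mul_neg_log_le_of_sum_le {ι : Type*} [Fintype ι] {q r : ι → ℝ} (hq : ∀ i, 0 ≤ q i)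
    (hr : ∀ i, 0 ≤ r i) (hqr : ∀ i, 0 < q i → 0 < r i) (hsum : ∑ i, r i ≤ ∑ i, q i) :
    ∑ i, q i * -log (q i) ≤ ∑ i, q i * -log (r i) := by
  have pointwise : ∀ i, q i * -log (q i) - q i * -log (r i) ≤ r i - q i := by
    intro i
    rcases (hq i).eq_or_lt with h | h
    · simp [← h, hr i]
    · have hlog := log_le_sub_one_of_pos (div_pos (hqr i h) h)
      rw [log_div (hqr i h).ne' h.ne'] at hlog
      have hmul : q i * (r i / q i - 1) = r i - q i := by field_simp
      nlinarith [mul_le_mul_of_nonneg_left hlog h.le]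
  have := sum_le_sum fun i (_ : i ∈ univ) => pointwise i
  rw [sum_sub_distrib, sum_sub_distrib] at this
  linarith

section Pr

variable {Ω : Type*} [Fintype Ω] {μ : Ω → ℝ} {α β : Type*} [DecidableEq α] [DecidableEq β]

lemma pr_nonneg (hμ : ∀ ω, 0 ≤ μ ω) (X : Ω → α) (x : α) : 0 ≤ pr μ X x :=
  sum_nonneg fun ω _ => by split_ifs <;> simp [hμ ω]

lemma pr_self_pos (hμ : ∀ ω, 0 ≤ μ ω) {ω : Ω} (hω : 0 < μ ω) (X : Ω → α) :
    0 < pr μ X (X ω) := by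
  refine hω.trans_le ?_
  unfold pr
  simpa using single_le_sum (f := fun ω' => if X ω' = X ω then μ ω' else 0)
    (fun ω' _ => by split_ifs <;> simp [hμ ω']) (mem_univ ω)

lemma pr_le_of_comp (hμ : ∀ ω, 0 ≤ μ ω) {X : Ω → α} {Y : Ω → β} {f : α → β}
    (hf : ∀ ω, f (X ω) = Y ω) (x : α) : pr μ X x ≤ pr μ Y (f x) :=
  sum_le_sum fun ω _ => by
    by_cases hx : X ω = x
    · simp [hx, ← hf ω]
    · simp only [hx, if_false]; split_ifs <;> simp [hμ ω]

lemma pr_self_eq_of_comp {X : Ω → α} {Y : Ω → β} {f : α → β} {g : β → α}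
    (hf : ∀ ω, f (X ω) = Y ω) (hg : ∀ ω, g (Y ω) = X ω) (ω : Ω) :
    pr μ X (X ω) = pr μ Y (Y ω) := by
  refine sum_congr rfl fun ω' _ => if_congr ⟨fun h => ?_, fun h => ?_⟩ rfl rfl
  · rw [← hf, ← hf, h]
  · rw [← hg, ← hg, h]

lemma sum_pr_prod_left [Fintype α] (X : Ω → α) (Y : Ω → β) (y : β) :
    ∑ x, pr μ (fun ω => (X ω, Y ω)) (x, y) = pr μ Y y := by
  simp only [pr, Prod.mk.injEq]
  rw [sum_comm]
  refine sum_congr rfl fun ω _ => ?_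
  by_cases h : Y ω = y <;> simp [h]

end Pr

section Entropy

variable {Ω : Type*} [Fintype Ω] {μ : Ω → ℝ}
  {α β γ δ : Type*} [Fintype α] [DecidableEq α] [Fintype β] [DecidableEq β]
  [Fintype γ] [DecidableEq γ] [Fintype δ] [DecidableEq δ]

lemma sum_pr_mul (X : Ω → α) (G : α → ℝ) : ∑ x, pr μ X x * G x = ∑ ω, μ ω * G (X ω) := by
  simp only [pr, sum_mul, ite_mul, zero_mul]
  rw [sum_comm]
  simp

lemma sum_pr (X : Ω → α) : ∑ x, pr μ X x = ∑ ω, μ ω := by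
  simpa using sum_pr_mul (μ := μ) X 1

lemma ent_eq_sum (X : Ω → α) : ent μ X = ∑ ω, μ ω * -log (pr μ X (X ω)) := by
  rw [← sum_pr_mul X fun x => -log (pr μ X x), ent]
  exact sum_congr rfl fun x _ => by rw [negMulLog]; ring

lemma ent_eq_of_comp {X : Ω → α} {Y : Ω → β} {f : α → β} {g : β → α}
    (hf : ∀ ω, f (X ω) = Y ω) (hg : ∀ ω, g (Y ω) = X ω) : ent μ X = ent μ Y := by
  simp only [ent_eq_sum, pr_self_eq_of_comp hf hg]

lemma ent_le_of_comp (hμ : ∀ ω, 0 ≤ μ ω) {X : Ω → α} {Y : Ω → β} {f : α → β}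
    (hf : ∀ ω, f (X ω) = Y ω) : ent μ Y ≤ ent μ X := by
  rw [ent_eq_sum, ent_eq_sum]
  refine sum_le_sum fun ω _ => ?_
  rcases (hμ ω).eq_or_lt with h | h
  · simp [← h]
  · have hX := pr_self_pos hμ h X
    have hXY : pr μ X (X ω) ≤ pr μ Y (Y ω) := hf ω ▸ pr_le_of_comp hμ hf (X ω)
    exact mul_le_mul_of_nonneg_left (neg_le_neg (log_le_log hX hXY)) h.le

lemma ent_prod_comm (X : Ω → α) (Y : Ω → β) :
    ent μ (fun ω => (X ω, Y ω)) = ent μ (fun ω => (Y ω, X ω)) :=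
  ent_eq_of_comp (f := Prod.swap) (g := Prod.swap) (fun _ => rfl) (fun _ => rfl)

lemma MarkovRV.ent_add_ent_eq (hμ : ∀ ω, 0 ≤ μ ω) {X : Ω → α} {W : Ω → β} {Z : Ω → γ}
    (h : MarkovRV μ X W Z) :
    ent μ (fun ω => (X ω, W ω, Z ω)) + ent μ W =
      ent μ (fun ω => (X ω, W ω)) + ent μ (fun ω => (W ω, Z ω)) := by
  simp only [ent_eq_sum, ← sum_add_distrib]
  refine sum_congr rfl fun ω _ => ?_
  rcases (hμ ω).eq_or_lt with hω | hω
  · simp [← hω]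
  · rw [← mul_add, ← mul_add, ← neg_add, ← neg_add,
      ← log_mul (pr_self_pos hμ hω fun ω => (X ω, W ω, Z ω)).ne' (pr_self_pos hμ hω W).ne',
      ← log_mul (pr_self_pos hμ hω fun ω => (X ω, W ω)).ne'
        (pr_self_pos hμ hω fun ω => (W ω, Z ω)).ne', h]

lemma MarkovRV.cmi_eq_zero (hμ : ∀ ω, 0 ≤ μ ω) {X : Ω → α} {W : Ω → β} {Z : Ω → γ}
    (h : MarkovRV μ X W Z) : cmi μ X Z W = 0 := by
  have hXZW : ent μ (fun ω => ((X ω, Z ω), W ω)) = ent μ (fun ω => (X ω, W ω, Z ω)) :=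
    ent_eq_of_comp (f := fun p => (p.1.1, p.2, p.1.2)) (g := fun p => ((p.1, p.2.2), p.2.1))
      (fun _ => rfl) (fun _ => rfl)
  have := h.ent_add_ent_eq hμ
  simp only [cmi, condEnt, ent_prod_comm Z W, hXZW]
  linarith

lemma cmi_prod_right (X : Ω → α) (Y : Ω → β) (Z : Ω → γ) (W : Ω → δ) :
    cmi μ X (fun ω => (Y ω, Z ω)) W = cmi μ X Y W + cmi μ X Z (fun ω => (W ω, Y ω)) := by
  have hYZW : ent μ (fun ω => ((Y ω, Z ω), W ω)) = ent μ (fun ω => (Z ω, W ω, Y ω)) :=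
    ent_eq_of_comp (f := fun p => (p.1.2, p.2, p.1.1)) (g := fun p => ((p.2.2, p.1), p.2.1))
      (fun _ => rfl) (fun _ => rfl)
  have hXYZW : ent μ (fun ω => ((X ω, Y ω, Z ω), W ω)) =
      ent μ (fun ω => ((X ω, Z ω), W ω, Y ω)) :=
    ent_eq_of_comp (f := fun p => ((p.1.1, p.1.2.2), p.2, p.1.2.1))
      (g := fun p => ((p.1.1, p.2.2, p.1.2), p.2.1)) (fun _ => rfl) (fun _ => rfl)
  have hXYW : ent μ (fun ω => ((X ω, Y ω), W ω)) = ent μ (fun ω => (X ω, W ω, Y ω)) :=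
    ent_eq_of_comp (f := fun p => (p.1.1, p.2, p.1.2)) (g := fun p => ((p.1, p.2.2), p.2.1))
      (fun _ => rfl) (fun _ => rfl)
  simp only [cmi, condEnt, hYZW, hXYZW, hXYW, ent_prod_comm Y W]
  ring

lemma cmi_prod_comm (X : Ω → α) (Y : Ω → β) (Z : Ω → γ) (W : Ω → δ) :
    cmi μ X (fun ω => (Y ω, Z ω)) W = cmi μ X (fun ω => (Z ω, Y ω)) W := by
  have hYZW : ent μ (fun ω => ((Y ω, Z ω), W ω)) = ent μ (fun ω => ((Z ω, Y ω), W ω)) :=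
    ent_eq_of_comp (f := fun p => (p.1.swap, p.2)) (g := fun p => (p.1.swap, p.2))
      (fun _ => rfl) (fun _ => rfl)
  have hXYZW : ent μ (fun ω => ((X ω, Y ω, Z ω), W ω)) =
      ent μ (fun ω => ((X ω, Z ω, Y ω), W ω)) :=
    ent_eq_of_comp (f := fun p => ((p.1.1, p.1.2.swap), p.2))
      (g := fun p => ((p.1.1, p.1.2.swap), p.2)) (fun _ => rfl) (fun _ => rfl)
  simp only [cmi, condEnt, hYZW, hXYZW]

lemma cmi_le_condEnt (hμ : ∀ ω, 0 ≤ μ ω) (X : Ω → α) (Y : Ω → β) (W : Ω → γ) :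
    cmi μ X Y W ≤ condEnt μ Y W := by
  have := ent_le_of_comp hμ (X := fun ω => ((X ω, Y ω), W ω)) (f := fun p => (p.1.1, p.2))
    fun _ => rfl
  simp only [cmi, condEnt]
  linarith

lemma sum_pr_mul_pr_div_pr (X : Ω → α) (Y : Ω → β) (W : Ω → γ) :
    ∑ t : α × β × γ, pr μ (fun ω => (X ω, W ω)) (t.1, t.2.2) *
      pr μ (fun ω => (Y ω, W ω)) t.2 / pr μ W t.2.2 = ∑ ω, μ ω := by
  rw [← sum_pr W]
  simp only [Fintype.sum_prod_type]
  rw [(sum_congr rfl fun x _ => sum_comm).trans sum_comm]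
  refine sum_congr rfl fun w _ => ?_
  simp only [← sum_div, ← mul_sum, ← sum_mul, sum_pr_prod_left]
  exact mul_self_div_self _

lemma condEnt_prod_le (hμ : ∀ ω, 0 ≤ μ ω) (X : Ω → α) (Y : Ω → β) (W : Ω → γ) :
    condEnt μ X (fun ω => (Y ω, W ω)) ≤ condEnt μ X W := by
  set T : Ω → α × β × γ := fun ω => (X ω, Y ω, W ω)
  set r : α × β × γ → ℝ := fun t => pr μ (fun ω => (X ω, W ω)) (t.1, t.2.2) *
    pr μ (fun ω => (Y ω, W ω)) t.2 / pr μ W t.2.2 with hr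
  have hr_nonneg : ∀ t, 0 ≤ r t := fun t =>
    div_nonneg (mul_nonneg (pr_nonneg hμ _ _) (pr_nonneg hμ _ _)) (pr_nonneg hμ _ _)
  have hr_pos : ∀ t, 0 < pr μ T t → 0 < r t := fun t ht =>
    div_pos
      (mul_pos (ht.trans_le (pr_le_of_comp hμ (f := fun t => (t.1, t.2.2)) (fun _ => rfl) t))
        (ht.trans_le (pr_le_of_comp hμ (f := Prod.snd) (fun _ => rfl) t)))
      (ht.trans_le (pr_le_of_comp hμ (f := fun t => t.2.2) (fun _ => rfl) t))
  have gibbs := sum_mul_neg_log_le_of_sum_le (pr_nonneg hμ T) hr_nonneg hr_pos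
    (by rw [sum_pr_mul_pr_div_pr, sum_pr])
  rw [sum_pr_mul T fun t => -log (pr μ T t), sum_pr_mul T fun t => -log (r t)] at gibbs
  have hr_ent : ∑ ω, μ ω * -log (r (T ω)) =
      ent μ (fun ω => (X ω, W ω)) + ent μ (fun ω => (Y ω, W ω)) - ent μ W := by
    simp only [ent_eq_sum, ← sum_add_distrib, ← sum_sub_distrib]
    refine sum_congr rfl fun ω _ => ?_
    rcases (hμ ω).eq_or_lt with hω | hω
    · simp [← hω]
    · have ha := (pr_self_pos hμ hω fun ω => (X ω, W ω)).ne'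
      have hb := (pr_self_pos hμ hω fun ω => (Y ω, W ω)).ne'
      have hc := (pr_self_pos hμ hω W).ne'
      simp only [hr, T]
      rw [log_div (mul_ne_zero ha hb) hc, log_mul ha hb]
      ring
  simp only [condEnt]
  rw [ent_eq_sum T]
  linarith

end Entropy

theorem stmt4 {Ω : Type*} [Fintype Ω]
    {α β γ δ : Type*} [Fintype α] [DecidableEq α] [Fintype β] [DecidableEq β]
    [Fintype γ] [DecidableEq γ] [Fintype δ] [DecidableEq δ]
    (μ : Ω → ℝ) (hμ : IsPmf μ)
    (K : Ω → α) (U : Ω → β) (Y : Ω → γ) (Z : Ω → δ)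
    (hMarkov : MarkovRV μ K (fun ω => (U ω, Y ω)) Z) :
    cmi μ K Y U - cmi μ K Z U = cmi μ K Y (fun ω => (U ω, Z ω)) ∧
    cmi μ K Y U - cmi μ K Z U ≤ condEnt μ Y Z := by
  have hchainYZ := cmi_prod_right (μ := μ) K Y Z U
  have hchainZY := cmi_prod_right (μ := μ) K Z Y U
  have hswap := cmi_prod_comm (μ := μ) K Y Z U
  have hzero := hMarkov.cmi_eq_zero hμ.1
  have hidentity : cmi μ K Y U - cmi μ K Z U = cmi μ K Y (fun ω => (U ω, Z ω)) := by linarith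
  refine ⟨hidentity, hidentity ▸ ?_⟩
  calc cmi μ K Y (fun ω => (U ω, Z ω)) ≤ condEnt μ Y (fun ω => (U ω, Z ω)) :=
        cmi_le_condEnt hμ.1 K Y _
    _ ≤ condEnt μ Y Z := condEnt_prod_le hμ.1 Y U Z
end

section
/- (Csiszár sum identity) For any discrete random vectors Z^N = (Z_1,...,Z_N), V^N = (V_1,...,V_N) and any random variable T on finite sets, ∑_{i=1}^N I(Z_i ; V_{i+1}^N | T, Z^{i-1}) = ∑_{i=1}^N I(V_i ; Z^{i-1} | T, V_{i+1}^N), where V_{i+1}^N = (V_{i+1},...,V_N) and Z^{i-1} = (Z_1,...,Z_{i-1}). -/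
open Finset Real

/-!
Each conditional mutual information in the identity is an alternating sum of four joint
entropies `H(T, Z^k, V_{l+1}^N)`. Every such entropy is computed from the partition of the sample
space that the variables induce, so it does not matter how the tuples are encoded. After this
rewriting, the difference of the two sides splits into three telescoping sums, along `k` with
`l = N`, along `l` with `k = 0`, and along the diagonal `k = l`, which cancel.
-/

section Entropy

variable {Ω α β : Type*} [Fintype Ω] [DecidableEq α] [DecidableEq β]

lemma pr_eq_sum_filter (μ : Ω → ℝ) (X : Ω → α) (x : α) :
    pr μ X x = ∑ ω with X ω = x, μ ω := by
  rw [pr, sum_filter]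

variable [Fintype α] [Fintype β]

lemma ent_eq_sum_fiber (μ : Ω → ℝ) (X : Ω → α) :
    ent μ X = ∑ ω, negMulLog (∑ ω' with X ω' = X ω, μ ω') / #{ω' | X ω' = X ω} := by
  have hzero : ∀ x ∈ univ, x ∉ univ.image X → negMulLog (pr μ X x) = 0 := by
    intro x _ hx
    rw [pr_eq_sum_filter, sum_eq_zero, negMulLog_zero]
    intro ω hω
    rw [← (mem_filter.mp hω).2] at hx
    exact absurd (mem_image_of_mem X (mem_univ ω)) hx
  rw [ent, ← sum_subset (subset_univ _) hzero]
  refine sum_image' _ fun ω _ => ?_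
  have hcard : (#{ω' | X ω' = X ω} : ℝ) ≠ 0 := by
    exact_mod_cast (card_pos.mpr ⟨ω, by simp⟩).ne'
  rw [sum_congr rfl fun ω' hω' => by rw [(mem_filter.mp hω').2],
    sum_const, nsmul_eq_mul, mul_div_cancel₀ _ hcard, pr_eq_sum_filter]

lemma ent_eq_of_eq_iff (μ : Ω → ℝ) {X : Ω → α} {Y : Ω → β}
    (h : ∀ ω ω', X ω' = X ω ↔ Y ω' = Y ω) : ent μ X = ent μ Y := by
  have hfib : ∀ ω, univ.filter (X · = X ω) = univ.filter (Y · = Y ω) := fun ω => by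
    ext ω'; simp [h]
  simp only [ent_eq_sum_fiber, hfib]

end Entropy

lemma cmi_eq_ent {Ω α β γ : Type*} [Fintype Ω] [Fintype α] [DecidableEq α]
    [Fintype β] [DecidableEq β] [Fintype γ] [DecidableEq γ]
    (μ : Ω → ℝ) (X : Ω → α) (Y : Ω → β) (W : Ω → γ) :
    cmi μ X Y W = ent μ (fun ω => (X ω, W ω)) + ent μ (fun ω => (Y ω, W ω))
      - ent μ (fun ω => ((X ω, Y ω), W ω)) - ent μ W := by
  simp only [cmi, condEnt]
  ring

lemma sum_range_csiszar_telescope (H : ℕ → ℕ → ℝ) (N : ℕ) :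
    ∑ i ∈ range N, (H (i + 1) N + H i (i + 1) - H (i + 1) (i + 1) - H i N) =
      ∑ i ∈ range N, (H 0 i + H i (i + 1) - H i i - H 0 (i + 1)) := by
  rw [← sub_eq_zero, ← sum_sub_distrib]
  calc ∑ i ∈ range N, ((H (i + 1) N + H i (i + 1) - H (i + 1) (i + 1) - H i N)
        - (H 0 i + H i (i + 1) - H i i - H 0 (i + 1)))
      = ∑ i ∈ range N, ((H (i + 1) N - H i N) + (H 0 (i + 1) - H 0 i)
          - (H (i + 1) (i + 1) - H i i)) := sum_congr rfl fun i _ => by ring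
    _ = 0 := by
      rw [sum_sub_distrib, sum_add_distrib, sum_range_sub (H · N), sum_range_sub (H 0),
        sum_range_sub (fun i => H i i)]
      ring

section Csiszar

variable {Ω : Type*} [Fintype Ω] {N : ℕ}
    {𝒵 𝒱 𝒯 : Type*} [Fintype 𝒵] [DecidableEq 𝒵] [Fintype 𝒱] [DecidableEq 𝒱]
    [Fintype 𝒯] [DecidableEq 𝒯]
    (μ : Ω → ℝ) (Z : Fin N → Ω → 𝒵) (V : Fin N → Ω → 𝒱) (T : Ω → 𝒯)

/-- `H(T, Z^k, V_{l+1}^N)` in the paper's one-based indexing. -/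
noncomputable def prefixSuffixEnt (k l : ℕ) : ℝ :=
  ent μ (fun ω => (T ω, (fun j : {j : Fin N // j.val < k} => Z j ω),
    fun j : {j : Fin N // l ≤ j.val} => V j ω))

lemma cmi_current_future_given_past (i : Fin N) :
    cmi μ (Z i) (fun ω (j : {j : Fin N // i < j}) => V j.1 ω)
        (fun ω => (T ω, fun j : Fin i.val => Z (Fin.castLE i.isLt.le j) ω)) =
      prefixSuffixEnt μ Z V T (i + 1) N + prefixSuffixEnt μ Z V T i (i + 1)
        - prefixSuffixEnt μ Z V T (i + 1) (i + 1) - prefixSuffixEnt μ Z V T i N := by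
  rw [cmi_eq_ent]
  congr 1; congr 1; congr 1
  all_goals
    refine ent_eq_of_eq_iff μ fun ω ω' => ?_
    simp only [Prod.mk.injEq, funext_iff, Subtype.forall, Fin.forall_iff, Fin.castLE_mk,
      Fin.lt_def]
    grind

lemma cmi_current_past_given_future (i : Fin N) :
    cmi μ (V i) (fun ω (j : Fin i.val) => Z (Fin.castLE i.isLt.le j) ω)
        (fun ω => (T ω, fun j : {j : Fin N // i < j} => V j.1 ω)) =
      prefixSuffixEnt μ Z V T 0 i + prefixSuffixEnt μ Z V T i (i + 1)
        - prefixSuffixEnt μ Z V T i i - prefixSuffixEnt μ Z V T 0 (i + 1) := by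
  rw [cmi_eq_ent]
  congr 1; congr 1; congr 1
  all_goals
    refine ent_eq_of_eq_iff μ fun ω ω' => ?_
    simp only [Prod.mk.injEq, funext_iff, Subtype.forall, Fin.forall_iff, Fin.castLE_mk,
      Fin.lt_def]
    grind

end Csiszar

theorem stmt5_general {Ω : Type*} [Fintype Ω] {N : ℕ}
    {𝒵 𝒱 𝒯 : Type*} [Fintype 𝒵] [DecidableEq 𝒵] [Fintype 𝒱] [DecidableEq 𝒱]
    [Fintype 𝒯] [DecidableEq 𝒯]
    (μ : Ω → ℝ)
    (Z : Fin N → Ω → 𝒵) (V : Fin N → Ω → 𝒱) (T : Ω → 𝒯) :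
    ∑ i : Fin N,
        cmi μ (Z i) (fun ω (j : {j : Fin N // i < j}) => V j.1 ω)
          (fun ω => (T ω, fun j : Fin i.val => Z (Fin.castLE i.isLt.le j) ω)) =
      ∑ i : Fin N,
        cmi μ (V i) (fun ω (j : Fin i.val) => Z (Fin.castLE i.isLt.le j) ω)
          (fun ω => (T ω, fun j : {j : Fin N // i < j} => V j.1 ω)) := by
  simp only [cmi_current_future_given_past, cmi_current_past_given_future]
  have := sum_range_csiszar_telescope (prefixSuffixEnt μ Z V T) N
  rwa [← Fin.sum_univ_eq_sum_range, ← Fin.sum_univ_eq_sum_range] at this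

theorem stmt5 {Ω : Type*} [Fintype Ω] {N : ℕ}
    {𝒵 𝒱 𝒯 : Type*} [Fintype 𝒵] [DecidableEq 𝒵] [Fintype 𝒱] [DecidableEq 𝒱]
    [Fintype 𝒯] [DecidableEq 𝒯]
    (μ : Ω → ℝ) (hμ : IsPmf μ)
    (Z : Fin N → Ω → 𝒵) (V : Fin N → Ω → 𝒱) (T : Ω → 𝒯) :
    ∑ i : Fin N,
        cmi μ (Z i) (fun ω (j : {j : Fin N // i < j}) => V j.1 ω)
          (fun ω => (T ω, fun j : Fin i.val => Z (Fin.castLE i.isLt.le j) ω)) =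
      ∑ i : Fin N,
        cmi μ (V i) (fun ω (j : Fin i.val) => Z (Fin.castLE i.isLt.le j) ω)
          (fun ω => (T ω, fun j : {j : Fin N // i < j} => V j.1 ω)) :=
  stmt5_general μ Z V T
end
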